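/- arXiv:2111.03825 — 5 statements merged into one kernel-verified Lean document; each statement's English description precedes it below -/
import Mathlib

section
/- Fix a ∈ (0,1) and d ∈ (0,1). The marginal-return function G(s) := a(1-a)(1-d)·((1 - exp(-s·d))/s)·exp(-(a(1-d)/d)·(1 - exp(-s·d))) is strictly decreasing in s on (0, ∞). -/
/-!
With `k = a(1-d)/d`, the function is `a(1-a)(1-d)` times the product of
`(1 - exp(-s d))/s` and `exp(-k(1 - exp(-s d)))`. The first factor is minus the slope of the
secant of the strictly convex function `s ↦ exp(-s d)` through `0`, hence positive and strictly
decreasing; the second is positive and decreasing because `k ≥ 0`.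
-/

open Real Set

theorem StrictAntiOn.mul_antitoneOn_of_nonneg_of_pos {ι α : Type*} [Preorder ι]
    [Mul α] [Zero α] [Preorder α] [PosMulMono α] [MulPosStrictMono α] {f g : ι → α} {s : Set ι}
    (hf : StrictAntiOn f s) (hg : AntitoneOn g s) (hf₀ : ∀ x ∈ s, 0 ≤ f x)
    (hg₀ : ∀ x ∈ s, 0 < g x) : StrictAntiOn (fun x => f x * g x) s :=
  fun x hx y hy hxy =>
    mul_lt_mul_of_lt_of_le_of_nonneg_of_pos (hf hx hy hxy) (hg hx hy hxy.le) (hf₀ y hy) (hg₀ x hx)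

theorem strictConvexOn_exp_neg_mul_right {d : ℝ} (hd : d ≠ 0) :
    StrictConvexOn ℝ univ fun s => exp (-(s * d)) := by
  refine ⟨convex_univ, fun x _ y _ hxy a b ha hb hab => ?_⟩
  have hne : -(x * d) ≠ -(y * d) := by
    simpa only [ne_eq, neg_inj, mul_left_inj' hd] using hxy
  convert strictConvexOn_exp.2 (mem_univ _) (mem_univ _) hne ha hb hab using 2
  simp only [smul_eq_mul]
  ring

theorem strictAntiOn_one_sub_exp_neg_mul_div {d : ℝ} (hd : d ≠ 0) :
    StrictAntiOn (fun s => (1 - exp (-(s * d))) / s) (Ioi 0) := by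
  intro x hx y hy hxy
  have hsecant := (strictConvexOn_exp_neg_mul_right hd).secant_strict_mono (mem_univ 0)
    (mem_univ x) (mem_univ y) (ne_of_gt hx) (ne_of_gt hy) hxy
  simp only [zero_mul, neg_zero, exp_zero, sub_zero] at hsecant
  dsimp only
  rw [← neg_sub, neg_div, ← neg_sub (exp (-(x * d))), neg_div]
  exact neg_lt_neg hsecant

theorem one_sub_exp_neg_mul_div_pos {d s : ℝ} (hd : 0 < d) (hs : 0 < s) :
    0 < (1 - exp (-(s * d))) / s := by
  have : exp (-(s * d)) < 1 := exp_lt_one_iff.2 (by simp only [Left.neg_neg_iff]; positivity)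
  exact div_pos (by linarith) hs

theorem antitone_exp_neg_mul_one_sub_exp_neg_mul {k d : ℝ} (hk : 0 ≤ k) (hd : 0 ≤ d) :
    Antitone fun s => exp (-(k * (1 - exp (-(s * d))))) := by
  intro x y hxy
  dsimp only
  gcongr

/-- The marginal-return function
`G(s) = a(1-a)(1-d)·((1 - exp(-s·d))/s)·exp(-(a(1-d)/d)·(1 - exp(-s·d)))`
is strictly decreasing in `s` on `(0, ∞)`, for fixed `a ∈ (0,1)` and `d ∈ (0,1)`. -/
theorem marginal_return_strictAntiOn (a d : ℝ)
    (ha : a ∈ Set.Ioo (0 : ℝ) 1) (hd : d ∈ Set.Ioo (0 : ℝ) 1) :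
    StrictAntiOn
      (fun s : ℝ =>
        a * (1 - a) * (1 - d) * ((1 - Real.exp (-(s * d))) / s) *
          Real.exp (-(a * (1 - d) / d * (1 - Real.exp (-(s * d))))))
      (Set.Ioi (0 : ℝ)) := by
  obtain ⟨ha₀, ha₁⟩ := ha
  obtain ⟨hd₀, hd₁⟩ := hd
  have hC : 0 < a * (1 - a) * (1 - d) := by
    have := sub_pos.2 ha₁; have := sub_pos.2 hd₁; positivity
  have hk : 0 ≤ a * (1 - d) / d := by have := sub_pos.2 hd₁; positivity
  refine StrictAntiOn.mul_antitoneOn_of_nonneg_of_pos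
    (fun x hx y hy hxy => mul_lt_mul_of_pos_left
      (strictAntiOn_one_sub_exp_neg_mul_div hd₀.ne' hx hy hxy) hC)
    ((antitone_exp_neg_mul_one_sub_exp_neg_mul hk hd₀.le).antitoneOn _)
    (fun s hs => (mul_pos hC (one_sub_exp_neg_mul_div_pos hd₀ hs)).le)
    (fun s _ => exp_pos _)
end

section
/- For all s > 0, d ∈ (0,1), and a ∈ [0,1], (a(1-d)·exp(-s·d) + 1/s)·(1 - exp(-s·d)) - d·exp(-s·d) > 0. -/
/-- For all `s > 0`, `d ∈ (0,1)` and `a ∈ [0,1]`,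
`(a(1-d)·exp(-s·d) + 1/s)·(1 - exp(-s·d)) - d·exp(-s·d) > 0`. -/
theorem denominator_positive (s d a : ℝ) (hs : 0 < s)
    (hd : d ∈ Set.Ioo (0 : ℝ) 1) (ha : a ∈ Set.Icc (0 : ℝ) 1) :
    (a * (1 - d) * Real.exp (-(s * d)) + 1 / s) * (1 - Real.exp (-(s * d))) -
      d * Real.exp (-(s * d)) > 0 := by
  obtain ⟨hd0, hd1⟩ := hd
  obtain ⟨ha0, ha1⟩ := ha
  have hx : 0 < s * d := mul_pos hs hd0
  have hkey : s * d + 1 < Real.exp (s * d) := Real.add_one_lt_exp (ne_of_gt hx)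
  have hE : 0 < Real.exp (s * d) := Real.exp_pos _
  have hinv : Real.exp (-(s * d)) = (Real.exp (s * d))⁻¹ := Real.exp_neg _
  have hEpos : 0 < Real.exp (-(s * d)) := Real.exp_pos _
  have hlt1 : Real.exp (-(s * d)) < 1 := by
    rw [hinv]
    exact inv_lt_one_of_one_lt₀ (by linarith)
  have hprod : Real.exp (-(s * d)) * Real.exp (s * d) = 1 := by
    rw [hinv]; field_simp
  -- second part: (1/s)*(1 - e) - d*e > 0
  have h2 : (1 / s) * (1 - Real.exp (-(s * d))) - d * Real.exp (-(s * d)) > 0 := by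
    have hs' : (0:ℝ) < 1 / s := by positivity
    have h2' : 1 - Real.exp (-(s * d)) - s * d * Real.exp (-(s * d)) > 0 := by
      nlinarith [mul_pos hEpos (sub_pos.mpr hkey), hprod]
    have heq : (1 / s) * (1 - Real.exp (-(s * d))) - d * Real.exp (-(s * d))
        = (1 / s) * (1 - Real.exp (-(s * d)) - s * d * Real.exp (-(s * d))) := by
      field_simp
    rw [heq]; exact mul_pos hs' h2' 
  have h1 : 0 ≤ a * (1 - d) * Real.exp (-(s * d)) * (1 - Real.exp (-(s * d))) := by
    have : 0 ≤ a * (1 - d) * Real.exp (-(s * d)) :=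
      mul_nonneg (mul_nonneg ha0 (by linarith)) hEpos.le
    exact mul_nonneg this (by linarith)
  nlinarith [h1, h2]
end

section
/- Fix x > 0 and define N(a) := 1 - 2a - a(1-a)·x for a ∈ [0,1]. Then ā := (2 + x - √(4 + x²))/(2x) lies in (0,1), N(ā) = 0, N(a) > 0 for all a ∈ [0, ā), and N(a) < 0 for all a ∈ (ā, 1]. -/
/-- Core of Part 1 of Proposition 3: for `x > 0` and `N(a) = 1 - 2a - a(1-a)·x`,
the threshold `ā = (2 + x - √(4 + x²))/(2x)` lies in `(0,1)`, it is the unique root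
of `N` in the sense that `N(ā) = 0`, `N(a) > 0` for `a ∈ [0, ā)` and `N(a) < 0` for
`a ∈ (ā, 1]`. -/
theorem threshold_sign_change (x : ℝ) (hx : 0 < x) :
    (2 + x - Real.sqrt (4 + x ^ 2)) / (2 * x) ∈ Set.Ioo (0 : ℝ) 1 ∧
    (1 - 2 * ((2 + x - Real.sqrt (4 + x ^ 2)) / (2 * x)) -
      ((2 + x - Real.sqrt (4 + x ^ 2)) / (2 * x)) *
        (1 - (2 + x - Real.sqrt (4 + x ^ 2)) / (2 * x)) * x = 0) ∧
    (∀ a : ℝ, a ∈ Set.Ico (0 : ℝ) ((2 + x - Real.sqrt (4 + x ^ 2)) / (2 * x)) →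
      1 - 2 * a - a * (1 - a) * x > 0) ∧
    (∀ a : ℝ, a ∈ Set.Ioc ((2 + x - Real.sqrt (4 + x ^ 2)) / (2 * x)) 1 →
      1 - 2 * a - a * (1 - a) * x < 0) := by
  set s := Real.sqrt (4 + x ^ 2) with hsdef
  have hs0 : (0:ℝ) ≤ 4 + x ^ 2 := by positivity
  have hs2 : s ^ 2 = 4 + x ^ 2 := Real.sq_sqrt hs0
  have hsnn : 0 ≤ s := Real.sqrt_nonneg _
  have hsx : x < s := by nlinarith
  have hslt : s < 2 + x := by nlinarith
  have h2x : (0:ℝ) < 2 * x := by linarith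
  have hgt1 : 2 - x < s := by nlinarith [sq_nonneg (s - (2 - x)), sq_nonneg (s + (2 - x))]
  refine ⟨⟨div_pos (by linarith) h2x, ?_⟩, ?_, ?_, ?_⟩
  · rw [div_lt_one h2x]; linarith
  · field_simp
    nlinarith [sq_nonneg s]
  · rintro a ⟨ha0, ha⟩
    rw [lt_div_iff₀ h2x] at ha
    have hkey : s < 2 + x - 2 * x * a := by linarith
    nlinarith [sq_nonneg (s - (2 + x - 2 * x * a))]
  · rintro a ⟨ha, ha1⟩
    rw [div_lt_iff₀ h2x] at ha
    have h1 : 2 + x - 2 * x * a < s := by linarith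
    have h2 : 0 < s + (2 + x - 2 * x * a) := by nlinarith
    nlinarith [mul_pos (sub_pos.mpr h1) h2]
end

section
/- Fix a ∈ (0,1), d ∈ (0,1), and s > 0. Then lim_{n → ∞} (1 - (1 - (1 - s/n)^{d·n})/(d·n))^{a·(1-d)·n} = exp(-(a(1-d)/d)·(1 - exp(-s·d))), and consequently the large-market friends matching rate equals Ψ(s,a) = 1 - exp(-(a(1-d)/d)·(1 - exp(-s·d))). -/
/-!
Both powers are of the form `(1 + g n) ^ (b * n)` with `n * g n → t`, whose limit is
`exp (b * t)` because `n * log (1 + g n) → t`: first with `g n = -s / n`, `b = d`, giving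
`(1 - s / n) ^ (d * n) → exp (-s d)`, and then with `n * g n = -(1 - (1 - s / n) ^ (d * n)) / d`,
`b = a (1 - d)`.
-/

open Filter Topology

lemma tendsto_one_add_rpow_mul_exp_of_tendsto {g : ℕ → ℝ} {t : ℝ} (b : ℝ)
    (hg : Tendsto (fun n : ℕ ↦ n * g n) atTop (𝓝 t)) :
    Tendsto (fun n : ℕ ↦ (1 + g n) ^ (b * n)) atTop (𝓝 (Real.exp (b * t))) := by
  have hg_zero : Tendsto g atTop (𝓝 0) := by
    have := hg.div_atTop tendsto_natCast_atTop_atTop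
    refine this.congr' ?_
    filter_upwards [eventually_ne_atTop 0] with n hn
    field_simp
  have hlog := (Real.tendsto_nat_mul_log_one_add_of_tendsto hg).const_mul b
  refine ((Real.continuous_exp.tendsto _).comp hlog).congr' ?_
  filter_upwards [hg_zero.eventually_const_lt (show (-1 : ℝ) < 0 by norm_num)] with n hn
  rw [Function.comp_apply, Real.rpow_def_of_pos (by linarith)]
  ring_nf

lemma tendsto_one_sub_div_rpow_mul (s d : ℝ) :
    Tendsto (fun n : ℕ ↦ (1 - s / n) ^ (d * n)) atTop (𝓝 (Real.exp (-(s * d)))) := by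
  have hg : Tendsto (fun n : ℕ ↦ (n : ℝ) * (-s / n)) atTop (𝓝 (-s)) := by
    refine tendsto_const_nhds.congr' ?_
    filter_upwards [eventually_ne_atTop 0] with n hn
    field_simp
  convert tendsto_one_add_rpow_mul_exp_of_tendsto d hg using 3 with n
  · rw [neg_div, ← sub_eq_add_neg]
  · ring_nf

theorem psi_large_market_limit_general (a d s : ℝ) :
    Tendsto
      (fun n : ℕ =>
        (1 - (1 - (1 - s / n) ^ (d * n)) / (d * n)) ^ (a * (1 - d) * n))
      atTop (𝓝 (Real.exp (-(a * (1 - d) / d * (1 - Real.exp (-(s * d))))))) ∧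
    Tendsto
      (fun n : ℕ =>
        1 - (1 - (1 - (1 - s / n) ^ (d * n)) / (d * n)) ^ (a * (1 - d) * n))
      atTop (𝓝 (1 - Real.exp (-(a * (1 - d) / d * (1 - Real.exp (-(s * d))))))) := by
  set g : ℕ → ℝ := fun n ↦ -(1 - (1 - s / n) ^ (d * n)) / (d * n)
  have hg : Tendsto (fun n : ℕ ↦ n * g n) atTop (𝓝 (-(1 - Real.exp (-(s * d))) / d)) := by
    refine (((tendsto_one_sub_div_rpow_mul s d).const_sub 1).neg.div_const d).congr' ?_
    filter_upwards [eventually_ne_atTop 0] with n hn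
    rw [mul_div_assoc', mul_comm (n : ℝ), mul_div_mul_right _ _ (Nat.cast_ne_zero.mpr hn)]
  have hφ := tendsto_one_add_rpow_mul_exp_of_tendsto (a * (1 - d)) hg
  have hlim : a * (1 - d) * (-(1 - Real.exp (-(s * d))) / d)
      = -(a * (1 - d) / d * (1 - Real.exp (-(s * d)))) := by ring
  rw [hlim] at hφ
  simp only [g, neg_div, ← sub_eq_add_neg] at hφ
  exact ⟨hφ, hφ.const_sub 1⟩

/-- Large-market limit of the probability `φ_n(s)` that a single individual is not
introduced to any potential partner through friends:
`(1 - (1 - (1 - s/n)^(d·n))/(d·n))^(a·(1-d)·n) → exp(-(a(1-d)/d)·(1 - exp(-s·d)))`,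
and consequently the friends matching rate is
`1 - φ_n(s) → Ψ(s,a) = 1 - exp(-(a(1-d)/d)·(1 - exp(-s·d)))`. -/
theorem psi_large_market_limit (a d s : ℝ)
    (ha : a ∈ Set.Ioo (0 : ℝ) 1) (hd : d ∈ Set.Ioo (0 : ℝ) 1) (hs : 0 < s) :
    Tendsto
      (fun n : ℕ =>
        (1 - (1 - (1 - s / n) ^ (d * n)) / (d * n)) ^ (a * (1 - d) * n))
      atTop (𝓝 (Real.exp (-(a * (1 - d) / d * (1 - Real.exp (-(s * d))))))) ∧
    Tendsto
      (fun n : ℕ =>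
        1 - (1 - (1 - (1 - s / n) ^ (d * n)) / (d * n)) ^ (a * (1 - d) * n))
      atTop (𝓝 (1 - Real.exp (-(a * (1 - d) / d * (1 - Real.exp (-(s * d))))))) :=
  psi_large_market_limit_general a d s
end

section
/- Fix a ∈ (0,1), d ∈ (0,1), h ∈ (0,1), Y > 1, and s_l > 0. Define H(s_h) := (1-a)·a·(1-d)·h·Y·(1 - exp(-d·s_h))·exp(-(a(1-d)·h·s_h·(1 - exp(-d·s_h)))/(d·(h·(s_h - s_l) + s_l)))/(h·(s_h - s_l) + s_l) for s_h > 0. Then H(s_h) > 0 for all s_h > 0, lim_{s_h → 0+} H(s_h) = 0, lim_{s_h → ∞} H(s_h) = 0, and there exists c̄ > 0 such that for every c with 0 < c < c̄ there exists s_h > 0 with H(s_h) = c. -/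
open Filter Topology

/-- High-type part of the existence result in Proposition 5: the marginal return
to socialization for high types
`H(s_h) = (1-a)·a·(1-d)·h·Y·(1 - exp(-d·s_h))·
  exp(-(a(1-d)·h·s_h·(1 - exp(-d·s_h)))/(d·(h·(s_h - s_l) + s_l)))/(h·(s_h - s_l) + s_l)`
is positive on `(0,∞)`, tends to `0` as `s_h → 0⁺` and as `s_h → ∞`, and there is a
threshold `c̄ > 0` such that every cost `c ∈ (0, c̄)` is attained: `H(s_h) = c` for
some `s_h > 0`. -/
theorem high_type_existence (a d h Y sl : ℝ)
    (ha : a ∈ Set.Ioo (0 : ℝ) 1) (hd : d ∈ Set.Ioo (0 : ℝ) 1)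
    (hh : h ∈ Set.Ioo (0 : ℝ) 1) (hY : 1 < Y) (hsl : 0 < sl) :
    (∀ sh : ℝ, 0 < sh →
      (1 - a) * a * (1 - d) * h * Y * (1 - Real.exp (-(d * sh))) *
        Real.exp (-(a * (1 - d) * h * sh * (1 - Real.exp (-(d * sh))) /
          (d * (h * (sh - sl) + sl)))) / (h * (sh - sl) + sl) > 0) ∧
    Tendsto
      (fun sh : ℝ =>
        (1 - a) * a * (1 - d) * h * Y * (1 - Real.exp (-(d * sh))) *
          Real.exp (-(a * (1 - d) * h * sh * (1 - Real.exp (-(d * sh))) /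
            (d * (h * (sh - sl) + sl)))) / (h * (sh - sl) + sl))
      (𝓝[>] (0 : ℝ)) (𝓝 (0 : ℝ)) ∧
    Tendsto
      (fun sh : ℝ =>
        (1 - a) * a * (1 - d) * h * Y * (1 - Real.exp (-(d * sh))) *
          Real.exp (-(a * (1 - d) * h * sh * (1 - Real.exp (-(d * sh))) /
            (d * (h * (sh - sl) + sl)))) / (h * (sh - sl) + sl))
      atTop (𝓝 (0 : ℝ)) ∧
    ∃ cbar : ℝ, 0 < cbar ∧ ∀ c : ℝ, 0 < c → c < cbar →
      ∃ sh : ℝ, 0 < sh ∧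
        (1 - a) * a * (1 - d) * h * Y * (1 - Real.exp (-(d * sh))) *
          Real.exp (-(a * (1 - d) * h * sh * (1 - Real.exp (-(d * sh))) /
            (d * (h * (sh - sl) + sl)))) / (h * (sh - sl) + sl) = c := by
  obtain ⟨ha0, ha1⟩ := ha
  obtain ⟨hd0, hd1⟩ := hd
  obtain ⟨hh0, hh1⟩ := hh
  set F : ℝ → ℝ := fun sh =>
    (1 - a) * a * (1 - d) * h * Y * (1 - Real.exp (-(d * sh))) *
      Real.exp (-(a * (1 - d) * h * sh * (1 - Real.exp (-(d * sh))) /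
        (d * (h * (sh - sl) + sl)))) / (h * (sh - sl) + sl) with hF
  have hden : ∀ x : ℝ, 0 ≤ x → 0 < h * (x - sl) + sl := by
    intro x hx
    nlinarith [mul_nonneg hh0.le hx]
  have hpos : ∀ x : ℝ, 0 < x → 0 < F x := by
    intro x hx
    have hdx : 0 < h * (x - sl) + sl := hden x hx.le
    have he : Real.exp (-(d * x)) < 1 := by
      rw [Real.exp_lt_one_iff]; nlinarith
    have h1 : 0 < 1 - Real.exp (-(d * x)) := by linarith
    have hnum : 0 < (1 - a) * a * (1 - d) * h * Y * (1 - Real.exp (-(d * x))) :=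
      mul_pos (mul_pos (mul_pos (mul_pos (mul_pos (by linarith) ha0) (by linarith)) hh0)
        (by linarith)) h1
    exact div_pos (mul_pos hnum (Real.exp_pos _)) hdx
  have hct : ∀ x : ℝ, 0 ≤ x → ContinuousAt F x := by
    intro x hx
    have hdx : h * (x - sl) + sl ≠ 0 := (hden x hx).ne'
    have hdd : d * (h * (x - sl) + sl) ≠ 0 := mul_ne_zero hd0.ne' hdx
    rw [hF]
    fun_prop (disch := assumption)
  have h0lim : Tendsto F (𝓝[>] (0 : ℝ)) (𝓝 0) := by
    have hF0 : F 0 = 0 := by simp [hF]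
    have := (hct 0 le_rfl).tendsto
    rw [hF0] at this
    exact this.mono_left nhdsWithin_le_nhds
  have hdenTop : Tendsto (fun x : ℝ => h * (x - sl) + sl) atTop atTop := by
    have h1 : Tendsto (fun x : ℝ => h * x + (sl - h * sl)) atTop atTop :=
      tendsto_atTop_add_const_right _ _ (tendsto_id.const_mul_atTop hh0)
    exact h1.congr (fun x => by ring)
  have hKlim : Tendsto (fun x : ℝ => (1 - a) * a * (1 - d) * h * Y / (h * (x - sl) + sl))
      atTop (𝓝 0) := tendsto_const_nhds.div_atTop hdenTop
  have hK0 : 0 < (1 - a) * a * (1 - d) * h * Y :=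
    mul_pos (mul_pos (mul_pos (mul_pos (by linarith) ha0) (by linarith)) hh0) (by linarith)
  have hatTop : Tendsto F atTop (𝓝 0) := by
    apply tendsto_of_tendsto_of_tendsto_of_le_of_le' tendsto_const_nhds hKlim
    · filter_upwards [eventually_gt_atTop (0 : ℝ)] with x hx
      exact (hpos x hx).le
    · filter_upwards [eventually_gt_atTop (0 : ℝ)] with x hx
      have hdx : 0 < h * (x - sl) + sl := hden x hx.le
      have he1 : Real.exp (-(d * x)) ≤ 1 := by
        rw [Real.exp_le_one_iff]; nlinarith
      have he0 : 0 < Real.exp (-(d * x)) := Real.exp_pos _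
      have hs0 : 0 ≤ a * (1 - d) * h * x * (1 - Real.exp (-(d * x))) /
          (d * (h * (x - sl) + sl)) := by
        apply div_nonneg
        · have h1e : 0 ≤ 1 - Real.exp (-(d * x)) := by linarith
          exact mul_nonneg (mul_nonneg (mul_nonneg (mul_nonneg ha0.le (by linarith)) hh0.le)
            hx.le) h1e
        · exact (mul_pos hd0 hdx).le
      have hE1 : Real.exp (-(a * (1 - d) * h * x * (1 - Real.exp (-(d * x))) /
          (d * (h * (x - sl) + sl)))) ≤ 1 := by
        rw [Real.exp_le_one_iff]; linarith
      have hE0 : 0 < Real.exp (-(a * (1 - d) * h * x * (1 - Real.exp (-(d * x))) /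
          (d * (h * (x - sl) + sl)))) := Real.exp_pos _
      rw [hF]
      have hnumle : (1 - a) * a * (1 - d) * h * Y * (1 - Real.exp (-(d * x))) *
          Real.exp (-(a * (1 - d) * h * x * (1 - Real.exp (-(d * x))) /
            (d * (h * (x - sl) + sl)))) ≤ (1 - a) * a * (1 - d) * h * Y := by
        nlinarith [mul_le_one₀ (by linarith : 1 - Real.exp (-(d * x)) ≤ 1) hE0.le hE1]
      exact div_le_div_of_nonneg_right hnumle hdx.le |>.trans_eq rfl
  refine ⟨hpos, h0lim, hatTop, F 1, hpos 1 one_pos, fun c hc hcc => ?_⟩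
  obtain ⟨s1, hFs1, hs1⟩ := ((h0lim.eventually (eventually_lt_nhds hc)).and
    self_mem_nhdsWithin).exists
  have hs1' : (0 : ℝ) < s1 := hs1
  have hcont : ContinuousOn F (Set.uIcc s1 1) := fun x hx =>
    (hct x (le_trans (le_min hs1'.le zero_le_one) (Set.uIcc_subset_uIcc_iff_le.mp
      (subset_refl _) |>.1.trans hx.1 : min s1 1 ≤ x))).continuousWithinAt
  have hmem : c ∈ Set.uIcc (F s1) (F 1) :=
    Set.mem_uIcc.mpr (Or.inl ⟨hFs1.le, hcc.le⟩)
  obtain ⟨sh, hsh, hFsh⟩ := intermediate_value_uIcc hcont hmem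
  refine ⟨sh, ?_, hFsh⟩
  have : min s1 1 ≤ sh := hsh.1
  have : (0:ℝ) < min s1 1 := lt_min hs1' one_pos
  linarith [hsh.1]
end
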